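/- arXiv:2312.13261 — 2 statements merged into one kernel-verified Lean document; each statement's English description precedes it below -/
import Mathlib

section
/- Suppose z ∈ ℂ and C > 0 are such that C·‖T y‖ ≤ ‖z·(T y) − T(T y)‖ for all y ∈ X (i.e., the lower resolvent bound C‖p‖ ≤ ‖(zI − T)p‖ holds for every p in the range of T). Then for every v ∈ X, C·|z|·‖v‖ ≤ (C + ‖T‖)·‖z·v − T v‖. In particular ‖(zI − T)v‖ ≥ (C|z|/(C + ‖T‖))·‖v‖ for all v ∈ X. (This is the paper's lemma extending the resolvent lower bound for the solution operator T from H¹(Ω) to the broken Sobolev space in the broken norm.) -/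
/-- If the lower resolvent bound `C‖p‖ ≤ ‖(zI − T)p‖` holds for every
`p` in the range of `T`, then for every `v`,
`C·|z|·‖v‖ ≤ (C + ‖T‖)·‖z·v − T v‖`, and in particular
`‖(zI − T)v‖ ≥ (C|z|/(C + ‖T‖))·‖v‖`. -/
theorem resolvent_lower_bound_broken_norm
    {X : Type*} [NormedAddCommGroup X] [NormedSpace ℂ X]
    (T : X →L[ℂ] X) (z : ℂ) (C : ℝ) (hC : 0 < C)
    (hrange : ∀ y : X, C * ‖T y‖ ≤ ‖z • (T y) - T (T y)‖) :
    ∀ v : X, C * ‖z‖ * ‖v‖ ≤ (C + ‖T‖) * ‖z • v - T v‖ ∧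
      (C * ‖z‖ / (C + ‖T‖)) * ‖v‖ ≤ ‖z • v - T v‖ := by
  intro v
  set w := z • v - T v with hw
  have hTw : T w = z • (T v) - T (T v) := by
    simp [hw, map_sub, map_smul]
  have h1 : C * ‖T v‖ ≤ ‖T‖ * ‖w‖ := by
    calc C * ‖T v‖ ≤ ‖z • (T v) - T (T v)‖ := hrange v
      _ = ‖T w‖ := by rw [hTw]
      _ ≤ ‖T‖ * ‖w‖ := T.le_opNorm w
  have hmain : C * ‖z‖ * ‖v‖ ≤ (C + ‖T‖) * ‖w‖ := by
    have : ‖z • v‖ ≤ ‖w‖ + ‖T v‖ := by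
      calc ‖z • v‖ = ‖w + T v‖ := by rw [hw, sub_add_cancel]
        _ ≤ ‖w‖ + ‖T v‖ := norm_add_le _ _
    have h2 : C * ‖z • v‖ ≤ C * ‖w‖ + C * ‖T v‖ := by nlinarith
    rw [norm_smul] at h2
    nlinarith
  refine ⟨hmain, ?_⟩
  have hpos : 0 < C + ‖T‖ := by positivity
  rw [div_mul_eq_mul_div, div_le_iff₀ hpos]
  linarith [hmain]
end

section
/- Assume â(p, p) = λ·b(p, p) (consistency of the continuous eigenpair tested against itself, which holds since p solves the continuous eigenvalue problem and p is conforming) and â_h(p_h, p_h) = λ_h·b_h(p_h, p_h) (the discrete eigenpair equation tested with p_h). Define the consistency functional N(v) := â(p, v) − λ·b(p, v) for v ∈ V. Then the following identity holds: (λ − λ_h)·b(p_h, p_h) = λ·b(p − p_h, p − p_h) − â(p − p_h, p − p_h) + 2·N(p − p_h) + [â(p_h, p_h) − â_h(p_h, p_h)] + λ_h·[b_h(p_h, p_h) − b(p_h, p_h)]. (This is the key algebraic identity in the paper's proof of the double order of convergence |λ − λ_h| ≤ K·h^{2 min{r,k}} for the eigenvalues.) -/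
/-- The key algebraic identity in the double-order eigenvalue error
estimate: with symmetric bilinear forms `â, b, â_h, b_h`, eigenpair relations
`â(p,p) = λ·b(p,p)` and `â_h(p_h,p_h) = λ_h·b_h(p_h,p_h)`, and the consistency
functional `N(v) := â(p,v) − λ·b(p,v)`, one has
`(λ − λ_h)·b(p_h,p_h) = λ·b(p−p_h,p−p_h) − â(p−p_h,p−p_h) + 2·N(p−p_h)
  + [â(p_h,p_h) − â_h(p_h,p_h)] + λ_h·[b_h(p_h,p_h) − b(p_h,p_h)]`. -/
theorem eigenvalue_double_order_identity
    {V : Type*} [AddCommGroup V] [Module ℝ V]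
    (ahat b ahath bh : V →ₗ[ℝ] V →ₗ[ℝ] ℝ)
    (hasymm : ∀ u v : V, ahat u v = ahat v u)
    (hbsymm : ∀ u v : V, b u v = b v u)
    (hahsymm : ∀ u v : V, ahath u v = ahath v u)
    (hbhsymm : ∀ u v : V, bh u v = bh v u)
    (p ph : V) (lam lamh : ℝ)
    (hcont : ahat p p = lam * b p p)
    (hdisc : ahath ph ph = lamh * bh ph ph)
    (N : V → ℝ) (hN : ∀ v : V, N v = ahat p v - lam * b p v) :
    (lam - lamh) * b ph ph
      = lam * b (p - ph) (p - ph) - ahat (p - ph) (p - ph) + 2 * N (p - ph)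
        + (ahat ph ph - ahath ph ph) + lamh * (bh ph ph - b ph ph) := by
  simp only [hN, map_sub, LinearMap.sub_apply, hasymm ph p, hbsymm ph p]
  linarith [hcont, hdisc]
end
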